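/- arXiv:hep-th/9912109 — 5 statements merged into one kernel-verified Lean document; each statement's English description precedes it below -/
import Mathlib

section
/- For every integer n ≥ 4 and every admissible function N for Δ(D_n), there exists no function F : Δ(D_n) → ℝ^n such that 2·⟨β, F(α)⟩ = Γ_N(β,α) + Γ_N(β,−α) for all α, β ∈ Δ(D_n). (This is the key nonexistence result behind Theorem 2.2 for the simply-laced Lie algebras so(2n,ℂ) of the D-series; since all roots have the same length there is a single coupling constant, which cancels from the identity.) -/
open scoped RealInnerProductSpace

/-- The standard basis vector `e_k` of `ℝ^n`. -/
noncomputable def eVec (n : ℕ) (k : Fin n) : EuclideanSpace ℝ (Fin n) :=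
  EuclideanSpace.single k 1

/-- The root system of type `D_n`: all vectors `±e_k ± e_l` with `k < l`. -/
def DeltaD (n : ℕ) : Set (EuclideanSpace ℝ (Fin n)) :=
  {v | ∃ k l : Fin n, k < l ∧ ∃ s t : ℝ, (s = 1 ∨ s = -1) ∧ (t = 1 ∨ t = -1) ∧
        v = s • eVec n k + t • eVec n l}

lemma pair_apply {n : ℕ} (s t : ℝ) (k l i : Fin n) :
    (s • eVec n k + t • eVec n l) i = (if i = k then s else 0) + (if i = l then t else 0) := by
  simp [eVec, EuclideanSpace.single_apply]

lemma coord_mem {n : ℕ} {v : EuclideanSpace ℝ (Fin n)} (hv : v ∈ DeltaD n) (i : Fin n) :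
    v i = 0 ∨ v i = 1 ∨ v i = -1 := by
  obtain ⟨k, l, hkl, s, t, hs, ht, rfl⟩ := hv
  rw [pair_apply]
  have hne : k ≠ l := ne_of_lt hkl
  rcases hs with rfl | rfl <;> rcases ht with rfl | rfl <;> split_ifs <;> simp_all

lemma coord_three {n : ℕ} {v : EuclideanSpace ℝ (Fin n)} (hv : v ∈ DeltaD n)
    {a b c : Fin n} (hab : a ≠ b) (hac : a ≠ c) (hbc : b ≠ c) :
    v a = 0 ∨ v b = 0 ∨ v c = 0 := by
  obtain ⟨k, l, hkl, s, t, hs, ht, rfl⟩ := hv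
  have key : ∀ i : Fin n, i ≠ k → i ≠ l → (s • eVec n k + t • eVec n l) i = 0 := by
    intro i h1 h2
    rw [pair_apply, if_neg h1, if_neg h2, add_zero]
  by_cases hak : a = k <;> by_cases hal : a = l <;> by_cases hbk : b = k <;>
    by_cases hbl : b = l <;> by_cases hck : c = k <;> by_cases hcl : c = l <;>
    first
      | exact Or.inl (key a (by assumption) (by assumption))
      | exact Or.inr (Or.inl (key b (by assumption) (by assumption)))
      | exact Or.inr (Or.inr (key c (by assumption) (by assumption)))
      | simp_all

lemma zero_not_mem {n : ℕ} : (0 : EuclideanSpace ℝ (Fin n)) ∉ DeltaD n := by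
  rintro ⟨k, l, hkl, s, t, hs, ht, heq⟩
  have h2 : (0 : EuclideanSpace ℝ (Fin n)) k = s := by
    rw [heq, pair_apply]
    simp [ne_of_lt hkl]
  have h3 : (0 : EuclideanSpace ℝ (Fin n)) k = 0 := rfl
  rcases hs with rfl | rfl <;> rw [h3] at h2 <;> norm_num at h2

lemma mem_deltaD {n : ℕ} {k l : Fin n} (h : k < l) {s t : ℝ}
    (hs : s = 1 ∨ s = -1) (ht : t = 1 ∨ t = -1) : s • eVec n k + t • eVec n l ∈ DeltaD n :=
  ⟨k, l, h, s, t, hs, ht, rfl⟩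

theorem stmt_4 (n : ℕ) (hn : 4 ≤ n)
    (N : EuclideanSpace ℝ (Fin n) → EuclideanSpace ℝ (Fin n) → ℝ)
    (hN : ∀ α ∈ DeltaD n, ∀ β ∈ DeltaD n, (N β α ≠ 0 ↔ β + α ∈ DeltaD n))
    (Γ : EuclideanSpace ℝ (Fin n) → EuclideanSpace ℝ (Fin n) → ℝ)
    (hΓ : ∀ β α : EuclideanSpace ℝ (Fin n),
      (β + α ∈ DeltaD n → Γ β α = N β α) ∧ (β + α ∉ DeltaD n → Γ β α = 0)) :
    ¬ ∃ F : EuclideanSpace ℝ (Fin n) → EuclideanSpace ℝ (Fin n),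
        ∀ α ∈ DeltaD n, ∀ β ∈ DeltaD n, 2 * ⟪β, F α⟫ = Γ β α + Γ β (-α) := by
  rintro ⟨F, hF⟩
  have h0 : 0 < n := by omega
  have h1 : 1 < n := by omega
  have h2 : 2 < n := by omega
  have h3 : 3 < n := by omega
  set i0 : Fin n := ⟨0, h0⟩ with hi0
  set i1 : Fin n := ⟨1, h1⟩ with hi1
  set i2 : Fin n := ⟨2, h2⟩ with hi2
  set i3 : Fin n := ⟨3, h3⟩ with hi3
  have h01 : i0 ≠ i1 := by simp [hi0, hi1, Fin.ext_iff]
  have h02 : i0 ≠ i2 := by simp [hi0, hi2, Fin.ext_iff]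
  have h03 : i0 ≠ i3 := by simp [hi0, hi3, Fin.ext_iff]
  have h12 : i1 ≠ i2 := by simp [hi1, hi2, Fin.ext_iff]
  have h13 : i1 ≠ i3 := by simp [hi1, hi3, Fin.ext_iff]
  have h23 : i2 ≠ i3 := by simp [hi2, hi3, Fin.ext_iff]
  have l01 : i0 < i1 := by simp [hi0, hi1, Fin.lt_def]
  have l12 : i1 < i2 := by simp [hi1, hi2, Fin.lt_def]
  have l23 : i2 < i3 := by simp [hi2, hi3, Fin.lt_def]
  have l02 : i0 < i2 := lt_trans l01 l12
  -- the roots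
  set α : EuclideanSpace ℝ (Fin n) := (1 : ℝ) • eVec n i0 + (1 : ℝ) • eVec n i1 with hα
  set γ2 : EuclideanSpace ℝ (Fin n) := (1 : ℝ) • eVec n i0 + (-1 : ℝ) • eVec n i1 with hγ2
  set γ3 : EuclideanSpace ℝ (Fin n) := (-1 : ℝ) • eVec n i2 + (1 : ℝ) • eVec n i3 with hγ3
  set γ4 : EuclideanSpace ℝ (Fin n) := (-1 : ℝ) • eVec n i2 + (-1 : ℝ) • eVec n i3 with hγ4
  set β1 : EuclideanSpace ℝ (Fin n) := (-1 : ℝ) • eVec n i0 + (1 : ℝ) • eVec n i2 with hβ1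
  have hαm : α ∈ DeltaD n := mem_deltaD l01 (Or.inl rfl) (Or.inl rfl)
  have hγ2m : γ2 ∈ DeltaD n := mem_deltaD l01 (Or.inl rfl) (Or.inr rfl)
  have hγ3m : γ3 ∈ DeltaD n := mem_deltaD l23 (Or.inr rfl) (Or.inl rfl)
  have hγ4m : γ4 ∈ DeltaD n := mem_deltaD l23 (Or.inr rfl) (Or.inr rfl)
  have hβ1m : β1 ∈ DeltaD n := mem_deltaD l02 (Or.inr rfl) (Or.inl rfl)
  -- coordinate evaluation helper
  have ev : ∀ (s t : ℝ) (k l i : Fin n),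
      (s • eVec n k + t • eVec n l) i = (if i = k then s else 0) + (if i = l then t else 0) :=
    pair_apply
  have addev : ∀ (v w : EuclideanSpace ℝ (Fin n)) (i : Fin n), (v + w) i = v i + w i :=
    fun _ _ _ => rfl
  have negev : ∀ (v : EuclideanSpace ℝ (Fin n)) (i : Fin n), (-v) i = -(v i) :=
    fun _ _ => rfl
  -- non-membership facts
  have big : ∀ v : EuclideanSpace ℝ (Fin n), ∀ i : Fin n, (v i = 2 ∨ v i = -2) → v ∉ DeltaD n := by
    intro v i hvi hv
    rcases coord_mem hv i with h | h | h <;> rcases hvi with h' | h' <;> rw [h] at h' <;> norm_num at h'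
  have hαα : (α + α) ∉ DeltaD n := by
    refine big _ i0 (Or.inl ?_)
    norm_num [hα, hγ2, hγ3, hγ4, hβ1, eVec, EuclideanSpace.single_apply, addev, negev, h01, h02, h03, h12, h13, h23, h01.symm, h02.symm, h03.symm, h12.symm, h13.symm, h23.symm]
  have hαnα : (α + -α) ∉ DeltaD n := by
    rw [add_neg_cancel]; exact zero_not_mem
  have hγ2α : (γ2 + α) ∉ DeltaD n := by
    refine big _ i0 (Or.inl ?_)
    norm_num [hα, hγ2, hγ3, hγ4, hβ1, eVec, EuclideanSpace.single_apply, addev, negev, h01, h02, h03, h12, h13, h23, h01.symm, h02.symm, h03.symm, h12.symm, h13.symm, h23.symm]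
  have hγ2nα : (γ2 + -α) ∉ DeltaD n := by
    refine big _ i1 (Or.inr ?_)
    norm_num [hα, hγ2, hγ3, hγ4, hβ1, eVec, EuclideanSpace.single_apply, addev, negev, h01, h02, h03, h12, h13, h23, h01.symm, h02.symm, h03.symm, h12.symm, h13.symm, h23.symm]
  have coord3 : ∀ v : EuclideanSpace ℝ (Fin n),
      v i0 ≠ 0 → v i1 ≠ 0 → v i2 ≠ 0 → v ∉ DeltaD n := by
    intro v hv0 hv1 hv2 hv
    rcases coord_three hv h01 h02 h12 with h | h | h
    exacts [hv0 h, hv1 h, hv2 h]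
  have hγ3α : (γ3 + α) ∉ DeltaD n := by
    refine coord3 _ ?_ ?_ ?_ <;>
      · norm_num [hα, hγ2, hγ3, hγ4, hβ1, eVec, EuclideanSpace.single_apply, addev, negev, h01, h02, h03, h12, h13, h23, h01.symm, h02.symm, h03.symm, h12.symm, h13.symm, h23.symm]
  have hγ3nα : (γ3 + -α) ∉ DeltaD n := by
    refine coord3 _ ?_ ?_ ?_ <;>
      · norm_num [hα, hγ2, hγ3, hγ4, hβ1, eVec, EuclideanSpace.single_apply, addev, negev, h01, h02, h03, h12, h13, h23, h01.symm, h02.symm, h03.symm, h12.symm, h13.symm, h23.symm]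
  have hγ4α : (γ4 + α) ∉ DeltaD n := by
    refine coord3 _ ?_ ?_ ?_ <;>
      · norm_num [hα, hγ2, hγ3, hγ4, hβ1, eVec, EuclideanSpace.single_apply, addev, negev, h01, h02, h03, h12, h13, h23, h01.symm, h02.symm, h03.symm, h12.symm, h13.symm, h23.symm]
  have hγ4nα : (γ4 + -α) ∉ DeltaD n := by
    refine coord3 _ ?_ ?_ ?_ <;>
      · norm_num [hα, hγ2, hγ3, hγ4, hβ1, eVec, EuclideanSpace.single_apply, addev, negev, h01, h02, h03, h12, h13, h23, h01.symm, h02.symm, h03.symm, h12.symm, h13.symm, h23.symm]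
  have hβ1nα : (β1 + -α) ∉ DeltaD n := by
    refine big _ i0 (Or.inr ?_)
    norm_num [hα, hγ2, hγ3, hγ4, hβ1, eVec, EuclideanSpace.single_apply, addev, negev, h01, h02, h03, h12, h13, h23, h01.symm, h02.symm, h03.symm, h12.symm, h13.symm, h23.symm]
  have hβ1α : (β1 + α) ∈ DeltaD n := by
    have : β1 + α = (1 : ℝ) • eVec n i1 + (1 : ℝ) • eVec n i2 := by
      rw [hβ1, hα]; module
    rw [this]
    exact mem_deltaD l12 (Or.inl rfl) (Or.inl rfl)
  -- inner product equations
  set x := F α with hx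
  have Eα : ⟪α, x⟫ = 0 := by
    have := hF α hαm α hαm
    rw [(hΓ α α).2 hαα, (hΓ α (-α)).2 hαnα] at this
    linarith
  have Eγ2 : ⟪γ2, x⟫ = 0 := by
    have := hF α hαm γ2 hγ2m
    rw [(hΓ γ2 α).2 hγ2α, (hΓ γ2 (-α)).2 hγ2nα] at this
    linarith
  have Eγ3 : ⟪γ3, x⟫ = 0 := by
    have := hF α hαm γ3 hγ3m
    rw [(hΓ γ3 α).2 hγ3α, (hΓ γ3 (-α)).2 hγ3nα] at this
    linarith
  have Eγ4 : ⟪γ4, x⟫ = 0 := by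
    have := hF α hαm γ4 hγ4m
    rw [(hΓ γ4 α).2 hγ4α, (hΓ γ4 (-α)).2 hγ4nα] at this
    linarith
  have hlin : α + γ2 + γ3 + γ4 = (-2 : ℝ) • β1 := by
    rw [hα, hγ2, hγ3, hγ4, hβ1]; module
  have hβ1inner : ⟪β1, x⟫ = 0 := by
    have h := congrArg (fun v => ⟪v, x⟫) hlin
    simp only [inner_add_left, real_inner_smul_left] at h
    rw [Eα, Eγ2, Eγ3, Eγ4] at h
    linarith
  have hNval : N β1 α = 0 := by
    have := hF α hαm β1 hβ1m
    rw [(hΓ β1 α).1 hβ1α, (hΓ β1 (-α)).2 hβ1nα, hβ1inner] at this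
    linarith
  exact (hN α hαm β1 hβ1m).2 hβ1α hNval
end

section
/- For every admissible function N for Δ(E_7), there exists no function F : Δ(E_7) → ℝ^8 such that 2·⟨β, F(α)⟩ = Γ_N(β,α) + Γ_N(β,−α) for all α, β ∈ Δ(E_7). (This is the key nonexistence result behind Theorem 2.2 for the exceptional simple Lie algebra E_7; since all roots have the same length there is a single coupling constant, which cancels from the identity.) -/
open scoped RealInnerProductSpace

/-- The standard basis vector `e_k` of `ℝ^8` (0-based indexing: `eVec8 k` is `e_{k+1}`). -/
noncomputable def eVec8 (k : Fin 8) : EuclideanSpace ℝ (Fin 8) :=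
  EuclideanSpace.single k 1

/-- The root system of type `E_7` in `ℝ^8`, consisting of `±(e_k − e_l)`, `±(e_k + e_l)`
for `1 ≤ k < l ≤ 6`, of `±(e_7 − e_8)`, and of
`±(1/2)(e_8 − e_7 + Σ_{k=1}^{6} ε_k e_k)` with signs `ε_k = ±1` whose product is `−1`
(i.e. an odd number of minus signs). -/
def DeltaE7 : Set (EuclideanSpace ℝ (Fin 8)) :=
  {v | (∃ k l : Fin 8, (k : ℕ) < (l : ℕ) ∧ (l : ℕ) ≤ 5 ∧ ∃ s : ℝ, (s = 1 ∨ s = -1) ∧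
          (v = s • (eVec8 k - eVec8 l) ∨ v = s • (eVec8 k + eVec8 l))) ∨
       (∃ s : ℝ, (s = 1 ∨ s = -1) ∧ v = s • (eVec8 6 - eVec8 7)) ∨
       (∃ s : ℝ, (s = 1 ∨ s = -1) ∧ ∃ ε : Fin 6 → ℝ, (∀ k, ε k = 1 ∨ ε k = -1) ∧
          (∏ k, ε k) = -1 ∧
          v = s • ((1/2 : ℝ) • (eVec8 7 - eVec8 6 +
                ∑ k : Fin 6, ε k • eVec8 (Fin.castLE (by norm_num) k))))}

lemma inner_e (k l : Fin 8) : ⟪eVec8 k, eVec8 l⟫ = if k = l then (1:ℝ) else 0 := by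
  simp only [eVec8, EuclideanSpace.inner_single_left, EuclideanSpace.single_apply,
    map_one, one_mul, eq_comm]

lemma inner_e_left (k : Fin 8) (v : EuclideanSpace ℝ (Fin 8)) : ⟪eVec8 k, v⟫ = v k := by
  simp [eVec8, EuclideanSpace.inner_single_left]

/-- Every vector in `Δ(E_7)` has squared norm `2`. -/
lemma deltaE7_inner_self {v : EuclideanSpace ℝ (Fin 8)} (hv : v ∈ DeltaE7) :
    ⟪v, v⟫ = 2 := by
  rcases hv with ⟨k, l, hkl, hl5, s, hs, hv | hv⟩ | ⟨s, hs, hv⟩ | ⟨s, hs, ε, hε, hprod, hv⟩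
  · have hne : k ≠ l := fun h => by simp [h] at hkl
    have hs2 : s * s = 1 := by rcases hs with h | h <;> rw [h] <;> norm_num
    rw [hv]
    simp only [real_inner_smul_left, real_inner_smul_right, inner_sub_left, inner_sub_right,
      inner_e, hne, Ne.symm hne, eq_self_iff_true, if_true, if_false]
    nlinarith [hs2]
  · have hne : k ≠ l := fun h => by simp [h] at hkl
    have hs2 : s * s = 1 := by rcases hs with h | h <;> rw [h] <;> norm_num
    rw [hv]
    simp only [real_inner_smul_left, real_inner_smul_right, inner_add_left, inner_add_right,
      inner_e, hne, Ne.symm hne, eq_self_iff_true, if_true, if_false]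
    nlinarith [hs2]
  · have hs2 : s * s = 1 := by rcases hs with h | h <;> rw [h] <;> norm_num
    rw [hv]
    simp only [real_inner_smul_left, real_inner_smul_right, inner_sub_left, inner_sub_right,
      inner_e, Fin.reduceEq, eq_self_iff_true, if_true, if_false]
    nlinarith [hs2]
  · have hs2 : s * s = 1 := by rcases hs with h | h <;> rw [h] <;> norm_num
    have hε2 : ∀ k, ε k * ε k = 1 := fun k => by rcases hε k with h | h <;> rw [h] <;> norm_num
    set w : EuclideanSpace ℝ (Fin 8) := eVec8 7 - eVec8 6 +
        ∑ k : Fin 6, ε k • eVec8 (Fin.castLE (by norm_num) k) with hw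
    have key : ∀ j : Fin 8, ⟪eVec8 j, w⟫ = ((if j = 7 then (1:ℝ) else 0) - if j = 6 then 1 else 0)
        + ∑ k : Fin 6, ε k * (if j = Fin.castLE (by norm_num) k then 1 else 0) := by
      intro j
      rw [hw]
      simp only [inner_add_right, inner_sub_right, inner_sum, real_inner_smul_right, inner_e]
    have h7 : ⟪eVec8 7, w⟫ = 1 := by
      rw [key, Finset.sum_eq_zero (fun k _ => by
        rw [if_neg (by simp only [Fin.ext_iff, Fin.coe_castLE]; omega), mul_zero])]
      simp
    have h6 : ⟪eVec8 6, w⟫ = -1 := by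
      rw [key, Finset.sum_eq_zero (fun k _ => by
        rw [if_neg (by simp only [Fin.ext_iff, Fin.coe_castLE]; omega), mul_zero])]
      simp
    have hck : ∀ k : Fin 6, ⟪eVec8 (Fin.castLE (by norm_num) k), w⟫ = ε k := by
      intro k
      rw [key, if_neg (by simp only [Fin.ext_iff, Fin.coe_castLE]; omega),
        if_neg (by simp only [Fin.ext_iff, Fin.coe_castLE]; omega)]
      have : ∀ l : Fin 6, ε l * (if (Fin.castLE (by norm_num : (6:ℕ) ≤ 8) k) =
          Fin.castLE (by norm_num) l then (1:ℝ) else 0) = if k = l then ε l else 0 := by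
        intro l
        rcases eq_or_ne k l with h | h
        · simp [h]
        · rw [if_neg (by simpa [Fin.ext_iff] using (Fin.val_ne_iff.mpr h : (k:ℕ) ≠ (l:ℕ))),
            if_neg h, mul_zero]
      rw [Finset.sum_congr rfl (fun l _ => this l), Finset.sum_ite_eq]
      simp
    have hww : ⟪w, w⟫ = 8 := by
      nth_rewrite 1 [hw]
      simp only [inner_add_left, inner_sub_left, sum_inner, real_inner_smul_left]
      rw [h7, h6, Finset.sum_congr rfl (fun k _ => by rw [hck k, hε2 k])]
      simp only [Finset.sum_const, Finset.card_univ, Fintype.card_fin, nsmul_eq_mul]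
      norm_num
    rw [hv]
    simp only [real_inner_smul_left, real_inner_smul_right, hww]
    rw [show s * (1/2 * (s * (1/2 * 8))) = (s * s) * 2 by ring, hs2]; norm_num

lemma not_mem_deltaE7 {v : EuclideanSpace ℝ (Fin 8)} (h : ⟪v, v⟫ ≠ 2) : v ∉ DeltaE7 :=
  fun hv => h (deltaE7_inner_self hv)

lemma mem_diff (k l : Fin 8) (hkl : (k : ℕ) < (l : ℕ)) (hl : (l : ℕ) ≤ 5) :
    eVec8 k - eVec8 l ∈ DeltaE7 :=
  Or.inl ⟨k, l, hkl, hl, 1, Or.inl rfl, Or.inl (by rw [one_smul])⟩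

lemma mem_sum (k l : Fin 8) (hkl : (k : ℕ) < (l : ℕ)) (hl : (l : ℕ) ≤ 5) :
    eVec8 k + eVec8 l ∈ DeltaE7 :=
  Or.inl ⟨k, l, hkl, hl, 1, Or.inl rfl, Or.inr (by rw [one_smul])⟩

lemma mem_neg {v : EuclideanSpace ℝ (Fin 8)} (hv : v ∈ DeltaE7) : -v ∈ DeltaE7 := by
  rcases hv with ⟨k, l, hkl, hl5, s, hs, hv | hv⟩ | ⟨s, hs, hv⟩ | ⟨s, hs, ε, hε, hprod, hv⟩
  · exact Or.inl ⟨k, l, hkl, hl5, -s, by rcases hs with h | h <;> simp [h], Or.inl (by rw [hv, neg_smul])⟩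
  · exact Or.inl ⟨k, l, hkl, hl5, -s, by rcases hs with h | h <;> simp [h], Or.inr (by rw [hv, neg_smul])⟩
  · exact Or.inr (Or.inl ⟨-s, by rcases hs with h | h <;> simp [h], by rw [hv, neg_smul]⟩)
  · exact Or.inr (Or.inr ⟨-s, by rcases hs with h | h <;> simp [h], ε, hε, hprod, by rw [hv, neg_smul]⟩)

theorem stmt_6
    (N : EuclideanSpace ℝ (Fin 8) → EuclideanSpace ℝ (Fin 8) → ℝ)
    (hN : ∀ α ∈ DeltaE7, ∀ β ∈ DeltaE7, (N β α ≠ 0 ↔ β + α ∈ DeltaE7))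
    (Γ : EuclideanSpace ℝ (Fin 8) → EuclideanSpace ℝ (Fin 8) → ℝ)
    (hΓ : ∀ β α : EuclideanSpace ℝ (Fin 8),
      (β + α ∈ DeltaE7 → Γ β α = N β α) ∧ (β + α ∉ DeltaE7 → Γ β α = 0)) :
    ¬ ∃ F : EuclideanSpace ℝ (Fin 8) → EuclideanSpace ℝ (Fin 8),
        ∀ α ∈ DeltaE7, ∀ β ∈ DeltaE7, 2 * ⟪β, F α⟫ = Γ β α + Γ β (-α) := by
  rintro ⟨F, hF⟩
  -- α = e₀ − e₁
  set α : EuclideanSpace ℝ (Fin 8) := eVec8 0 - eVec8 1 with hα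
  have hαΔ : α ∈ DeltaE7 := mem_diff 0 1 (by decide) (by decide)
  set x := F α with hx
  -- Utility to kill Γ terms: if β + γ is not a root, Γ β γ = 0.
  have hΓ0 : ∀ β γ : EuclideanSpace ℝ (Fin 8), β + γ ∉ DeltaE7 → Γ β γ = 0 :=
    fun β γ h => (hΓ β γ).2 h
  -- squared norms of various non-roots
  have zero_nr : (0 : EuclideanSpace ℝ (Fin 8)) ∉ DeltaE7 := not_mem_deltaE7 (by simp)
  -- generic tool: prove ⟪β, x⟫ = 0 from both β ± α being non-roots
  have tool : ∀ β ∈ DeltaE7, β + α ∉ DeltaE7 → β + -α ∉ DeltaE7 → ⟪β, x⟫ = 0 := by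
    intro β hβ h1 h2
    have := hF α hαΔ β hβ
    rw [hΓ0 β α h1, hΓ0 β (-α) h2] at this
    linarith
  -- ⟪α, x⟫ = 0
  have e01 : ⟪α, x⟫ = 0 := by
    refine tool α hαΔ (not_mem_deltaE7 ?_) (by rw [add_neg_cancel]; exact zero_nr)
    rw [hα]
    simp only [inner_add_left, inner_add_right, inner_sub_left, inner_sub_right, inner_e,
      Fin.reduceEq, eq_self_iff_true, if_true, if_false]
    norm_num
  -- ⟪e₀ + e₁, x⟫ = 0
  have e01' : ⟪eVec8 0 + eVec8 1, x⟫ = 0 := by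
    refine tool _ (mem_sum 0 1 (by decide) (by decide)) (not_mem_deltaE7 ?_)
      (not_mem_deltaE7 ?_) <;> rw [hα] <;>
    · simp only [inner_add_left, inner_add_right, inner_sub_left, inner_sub_right,
        inner_neg_left, inner_neg_right, inner_e, Fin.reduceEq, eq_self_iff_true, if_true, if_false]
      norm_num
  -- ⟪e₂ ± e₃, x⟫ = 0
  have e23 : ⟪eVec8 2 - eVec8 3, x⟫ = 0 := by
    refine tool _ (mem_diff 2 3 (by decide) (by decide)) (not_mem_deltaE7 ?_)
      (not_mem_deltaE7 ?_) <;> rw [hα] <;>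
    · simp only [inner_add_left, inner_add_right, inner_sub_left, inner_sub_right,
        inner_neg_left, inner_neg_right, inner_e, Fin.reduceEq, eq_self_iff_true, if_true, if_false]
      norm_num
  have e23' : ⟪eVec8 2 + eVec8 3, x⟫ = 0 := by
    refine tool _ (mem_sum 2 3 (by decide) (by decide)) (not_mem_deltaE7 ?_)
      (not_mem_deltaE7 ?_) <;> rw [hα] <;>
    · simp only [inner_add_left, inner_add_right, inner_sub_left, inner_sub_right,
        inner_neg_left, inner_neg_right, inner_e, Fin.reduceEq, eq_self_iff_true, if_true, if_false]
      norm_num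
  -- the contradiction root: β = e₀ − e₂
  set β : EuclideanSpace ℝ (Fin 8) := eVec8 0 - eVec8 2 with hβeq
  have hβΔ : β ∈ DeltaE7 := mem_diff 0 2 (by decide) (by decide)
  -- β + α is not a root (norm 6)
  have hβα : β + α ∉ DeltaE7 := by
    refine not_mem_deltaE7 ?_
    rw [hβeq, hα]
    simp only [inner_add_left, inner_add_right, inner_sub_left, inner_sub_right, inner_e,
      Fin.reduceEq, eq_self_iff_true, if_true, if_false]
    norm_num
  -- β + (−α) = e₁ − e₂ is a root
  have hβnegα : β + -α ∈ DeltaE7 := by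
    have : β + -α = eVec8 1 - eVec8 2 := by rw [hβeq, hα]; abel
    rw [this]
    exact mem_diff 1 2 (by decide) (by decide)
  -- N β (−α) ≠ 0
  have hNne : N β (-α) ≠ 0 := (hN (-α) (mem_neg hαΔ) β hβΔ).mpr hβnegα
  -- main identity for β
  have hmain := hF α hαΔ β hβΔ
  rw [hΓ0 β α hβα, (hΓ β (-α)).1 hβnegα] at hmain
  -- but ⟪β, x⟫ = 0
  have hβx : ⟪β, x⟫ = 0 := by
    have h1 : ⟪eVec8 0, x⟫ = 0 := by
      have := e01; have := e01'
      rw [hα] at *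
      simp only [inner_add_left, inner_sub_left] at *
      linarith
    have h2 : ⟪eVec8 2, x⟫ = 0 := by
      have := e23; have := e23'
      simp only [inner_add_left, inner_sub_left] at *
      linarith
    rw [hβeq, inner_sub_left, h1, h2, sub_zero]
  rw [hβx] at hmain
  exact hNne (by linarith)
end

section
/- For all nonzero real numbers g_l and g_s and every admissible function N for Δ(B_2), there exists no function F : Δ(B_2) → ℝ² such that 2·g(β)·⟨β, F(α)⟩ = Γ_{g,N}(β,α) + Γ_{g,N}(β,−α) for all α, β ∈ Δ(B_2), where g(β) = g_l if β is one of the long roots ±e_1 ± e_2 and g(β) = g_s if β is one of the short roots ±e_1, ±e_2. (This is the key nonexistence result behind Theorem 2.2 for the rank-two Lie algebra so(5,ℂ) ≅ sp(4,ℂ), i.e. B_2 = C_2.) -/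
open scoped RealInnerProductSpace

/-- The standard basis vector `e_k` of `ℝ²`. -/
noncomputable def eVec2 (k : Fin 2) : EuclideanSpace ℝ (Fin 2) :=
  EuclideanSpace.single k 1

/-- The root system of type `B_2`: the long roots `±e_1 ± e_2` and the
short roots `±e_1, ±e_2`. -/
def DeltaB2 : Set (EuclideanSpace ℝ (Fin 2)) :=
  {v | ∃ s : ℝ, (s = 1 ∨ s = -1) ∧
      (v = s • eVec2 0 ∨ v = s • eVec2 1 ∨
       v = s • (eVec2 0 + eVec2 1) ∨ v = s • (eVec2 0 - eVec2 1))}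

/-!
Take `α = e₁ + e₂`. For the two long roots `β = e₁ ± e₂` neither `β + α` nor `β - α` is a root,
so the equation at `(α, β)` forces `⟨β, F α⟩ = 0`; as `e₁ ± e₂` span `ℝ²`, `F α = 0`. But for
`β = e₁` the sum `β + α` is not a root while `β - α = -e₂` is, so the right-hand side is
`g_s · N(e₁, -α) ≠ 0` by admissibility, whereas the left-hand side vanishes.
-/

section PairingEquation

variable {E : Type*} [NormedAddCommGroup E] [InnerProductSpace ℝ E] {Δ : Set E}
  {g : E → ℝ} {N Γ : E → E → ℝ} {F : E → E} {α β : E}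

theorem inner_eq_zero_of_add_notMem_of_sub_notMem
    (hΓ : ∀ β α, β + α ∉ Δ → Γ β α = 0) (hF : 2 * g β * ⟪β, F α⟫ = Γ β α + Γ β (-α))
    (hg : g β ≠ 0) (hadd : β + α ∉ Δ) (hsub : β + -α ∉ Δ) : ⟪β, F α⟫ = 0 := by
  rw [hΓ β α hadd, hΓ β (-α) hsub, add_zero] at hF
  simpa [hg] using hF

theorem inner_ne_zero_of_add_notMem_of_sub_mem
    (hΓ : ∀ β α, (β + α ∈ Δ → Γ β α = g (β + α) * N β α) ∧ (β + α ∉ Δ → Γ β α = 0))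
    (hF : 2 * g β * ⟪β, F α⟫ = Γ β α + Γ β (-α)) (hadd : β + α ∉ Δ) (hsub : β + -α ∈ Δ)
    (hg : g (β + -α) ≠ 0) (hN : N β (-α) ≠ 0) : ⟪β, F α⟫ ≠ 0 := by
  intro h
  rw [h, mul_zero, (hΓ β α).2 hadd, (hΓ β (-α)).1 hsub, zero_add] at hF
  exact mul_ne_zero hg hN hF.symm

end PairingEquation

theorem inner_eq_zero_of_inner_add_eq_zero_of_inner_sub_eq_zero {E : Type*}
    [NormedAddCommGroup E] [InnerProductSpace ℝ E] {u v x : E}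
    (hadd : ⟪u + v, x⟫ = 0) (hsub : ⟪u - v, x⟫ = 0) : ⟪u, x⟫ = 0 := by
  rw [inner_add_left] at hadd
  rw [inner_sub_left] at hsub
  linarith

section DeltaB2

theorem eVec2_mem_DeltaB2 (k : Fin 2) : eVec2 k ∈ DeltaB2 :=
  ⟨1, Or.inl rfl, by fin_cases k <;> simp⟩

theorem eVec2_add_eVec2_mem_DeltaB2 : eVec2 0 + eVec2 1 ∈ DeltaB2 :=
  ⟨1, Or.inl rfl, by simp⟩

theorem eVec2_sub_eVec2_mem_DeltaB2 : eVec2 0 - eVec2 1 ∈ DeltaB2 :=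
  ⟨1, Or.inl rfl, by simp⟩

theorem neg_mem_DeltaB2 {v : EuclideanSpace ℝ (Fin 2)} (hv : v ∈ DeltaB2) : -v ∈ DeltaB2 := by
  obtain ⟨s, hs, hv⟩ := hv
  refine ⟨-s, by rcases hs with rfl | rfl <;> norm_num, ?_⟩
  rcases hv with rfl | rfl | rfl | rfl <;> simp only [← neg_smul, true_or, or_true]

theorem zero_notMem_DeltaB2 : (0 : EuclideanSpace ℝ (Fin 2)) ∉ DeltaB2 := by
  rintro ⟨s, hs, h | h | h | h⟩ <;>
    · have h0 := congrArg (· 0) h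
      have h1 := congrArg (· 1) h
      rcases hs with rfl | rfl <;> simp [eVec2] at h0 h1

theorem abs_apply_le_one_of_mem_DeltaB2 {v : EuclideanSpace ℝ (Fin 2)} (hv : v ∈ DeltaB2)
    (i : Fin 2) : |v i| ≤ 1 := by
  obtain ⟨s, hs, rfl | rfl | rfl | rfl⟩ := hv <;>
    rcases hs with rfl | rfl <;> fin_cases i <;> simp [eVec2]

theorem notMem_DeltaB2_of_one_lt_abs {v : EuclideanSpace ℝ (Fin 2)} (i : Fin 2)
    (h : 1 < |v i|) : v ∉ DeltaB2 :=
  fun hv => (abs_apply_le_one_of_mem_DeltaB2 hv i).not_gt h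

end DeltaB2

theorem stmt_9 (gl gs : ℝ) (hgl : gl ≠ 0) (hgs : gs ≠ 0)
    (N : EuclideanSpace ℝ (Fin 2) → EuclideanSpace ℝ (Fin 2) → ℝ)
    (hN : ∀ α ∈ DeltaB2, ∀ β ∈ DeltaB2, (N β α ≠ 0 ↔ β + α ∈ DeltaB2))
    (g : EuclideanSpace ℝ (Fin 2) → ℝ)
    (hglong : ∀ s t : ℝ, (s = 1 ∨ s = -1) → (t = 1 ∨ t = -1) →
      g (s • eVec2 0 + t • eVec2 1) = gl)
    (hgshort : ∀ s : ℝ, (s = 1 ∨ s = -1) → g (s • eVec2 0) = gs ∧ g (s • eVec2 1) = gs)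
    (Γ : EuclideanSpace ℝ (Fin 2) → EuclideanSpace ℝ (Fin 2) → ℝ)
    (hΓ : ∀ β α : EuclideanSpace ℝ (Fin 2),
      (β + α ∈ DeltaB2 → Γ β α = g (β + α) * N β α) ∧ (β + α ∉ DeltaB2 → Γ β α = 0)) :
    ¬ ∃ F : EuclideanSpace ℝ (Fin 2) → EuclideanSpace ℝ (Fin 2),
        ∀ α ∈ DeltaB2, ∀ β ∈ DeltaB2, 2 * g β * ⟪β, F α⟫ = Γ β α + Γ β (-α) := by
  rintro ⟨F, hF⟩
  set a := eVec2 0 + eVec2 1 with ha_def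
  set b := eVec2 0 - eVec2 1 with hb_def
  have ha : a ∈ DeltaB2 := eVec2_add_eVec2_mem_DeltaB2
  have hΓ₀ : ∀ β α, β + α ∉ DeltaB2 → Γ β α = 0 := fun β α => (hΓ β α).2
  have haa : ⟪a, F a⟫ = 0 := by
    refine inner_eq_zero_of_add_notMem_of_sub_notMem hΓ₀ (hF a ha a ha) ?_
      (notMem_DeltaB2_of_one_lt_abs 0 ?_) (by simpa using zero_notMem_DeltaB2)
    · simpa using (hglong 1 1 (.inl rfl) (.inl rfl)).trans_ne hgl
    · norm_num [ha_def, eVec2]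
  have hba : ⟪b, F a⟫ = 0 := by
    refine inner_eq_zero_of_add_notMem_of_sub_notMem hΓ₀
      (hF a ha b eVec2_sub_eVec2_mem_DeltaB2) ?_
      (notMem_DeltaB2_of_one_lt_abs 0 ?_) (notMem_DeltaB2_of_one_lt_abs 1 ?_)
    · simpa [← sub_eq_add_neg] using (hglong 1 (-1) (.inl rfl) (.inr rfl)).trans_ne hgl
    · norm_num [ha_def, hb_def, eVec2]
    · norm_num [ha_def, hb_def, eVec2]
  have hdiff : eVec2 0 + -a = -eVec2 1 := by rw [ha_def]; abel
  have hdiff_mem : eVec2 0 + -a ∈ DeltaB2 := hdiff ▸ neg_mem_DeltaB2 (eVec2_mem_DeltaB2 1)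
  refine inner_ne_zero_of_add_notMem_of_sub_mem hΓ (hF a ha _ (eVec2_mem_DeltaB2 0))
    (notMem_DeltaB2_of_one_lt_abs 0 ?_) hdiff_mem ?_
    ((hN _ (neg_mem_DeltaB2 ha) _ (eVec2_mem_DeltaB2 0)).2 hdiff_mem)
    (inner_eq_zero_of_inner_add_eq_zero_of_inner_sub_eq_zero haa hba)
  · norm_num [ha_def, eVec2]
  · simpa [hdiff] using (hgshort (-1) (.inr rfl)).2.trans_ne hgs
end

section
/- Fix integers p ≥ 2 and q ≥ p + 2, set n = p + q, and let θ and the couplings g_{ab} be as in the general AIII construction, with real parameters g, g_2 arbitrary and g_1 ≠ 0. Then there exists no family of n×n real diagonal matrices F_{ab}, indexed by ordered pairs (a,b) with 1 ≤ a ≠ b ≤ n not both lying in the middle block {p+1,…,q}, such that for all such pairs (a,b) and all pairs (c,d) with 1 ≤ c ≠ d ≤ n not both lying in {p+1,…,q}, the symmetric-pair combinatoric identity holds: 2·g_{cd}·((F_{ab})_{cc} − (F_{ab})_{dd}) = (1/4)·Σ_{(x,y) ∈ {(a,b),(b,a)}} [ g_{cy}·δ(d,x) − g_{dx}·δ(c,y)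 + g_{θ(c)y}·δ(θ(d),x) − g_{θ(d)x}·δ(θ(c),y) + g_{cθ(y)}·δ(d,θ(x)) − g_{dθ(x)}·δ(c,θ(y)) + g_{θ(c)θ(y)}·δ(θ(d),θ(x)) − g_{θ(d)θ(x)}·δ(θ(c),θ(y)) ]. (This is the nonexistence part of Theorem 3.3: for the AIII-series the combinatoric identity has no solution when q ≥ p + 2.) -/
open Matrix

/-- The involution `θ` of `{1,…,p+q}` (0-based: `{0,…,p+q−1}`) for the general AIII
construction: `θ(a) = a + q` on the first block `{0,…,p−1}`, `θ(a) = a` on the middle block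
`{p,…,q−1}`, and `θ(a) = a − q` on the third block `{q,…,p+q−1}`. -/
def thetaG (p q : ℕ) (a : Fin (p+q)) : Fin (p+q) :=
  if h : (a : ℕ) < p then ⟨a + q, by omega⟩
  else if h' : (a : ℕ) < q then a
  else ⟨(a : ℕ) - q, by have := a.isLt; omega⟩

/-- `a` lies in the middle (second) block `{p+1,…,q}` (0-based: `{p,…,q−1}`). -/
def midB (p q : ℕ) (a : Fin (p+q)) : Prop := p ≤ (a : ℕ) ∧ (a : ℕ) < q

instance (p q : ℕ) (a : Fin (p+q)) : Decidable (midB p q a) := by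
  unfold midB; infer_instance

/-- The coupling constants for the general AIII construction: `g_{aa} = 0`; `g_{ab} = 0`
if `a` and `b` both lie in the middle block; `g_{ab} = g₁` if exactly one of `a`, `b` lies
in the middle block; `g_{ab} = g₂` if `b = θ(a) ≠ a`; and `g_{ab} = g` otherwise. -/
def gG (p q : ℕ) (g g1 g2 : ℝ) (a b : Fin (p+q)) : ℝ :=
  if a = b then 0
  else if midB p q a ∧ midB p q b then 0
  else if (midB p q a ∧ ¬ midB p q b) ∨ (¬ midB p q a ∧ midB p q b) then g1
  else if b = thetaG p q a ∧ thetaG p q a ≠ a then g2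
  else g

/-- Kronecker delta. -/
def kd {n : ℕ} (i j : Fin n) : ℝ := if i = j then 1 else 0

theorem stmt_14 (p q : ℕ) (hp : 2 ≤ p) (hq : p + 2 ≤ q) (g g1 g2 : ℝ) (hg1 : g1 ≠ 0) :
    ¬ ∃ F : Fin (p+q) → Fin (p+q) → Matrix (Fin (p+q)) (Fin (p+q)) ℝ,
      (∀ a b : Fin (p+q), a ≠ b → ¬ (midB p q a ∧ midB p q b) → (F a b).IsDiag) ∧
      (∀ a b c d : Fin (p+q), a ≠ b → ¬ (midB p q a ∧ midB p q b) →
        c ≠ d → ¬ (midB p q c ∧ midB p q d) →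
        2 * gG p q g g1 g2 c d * (F a b c c - F a b d d) =
          (1/4 : ℝ) *
           ((gG p q g g1 g2 c b * kd d a - gG p q g g1 g2 d a * kd c b
             + gG p q g g1 g2 (thetaG p q c) b * kd (thetaG p q d) a
             - gG p q g g1 g2 (thetaG p q d) a * kd (thetaG p q c) b
             + gG p q g g1 g2 c (thetaG p q b) * kd d (thetaG p q a)
             - gG p q g g1 g2 d (thetaG p q a) * kd c (thetaG p q b)
             + gG p q g g1 g2 (thetaG p q c) (thetaG p q b) * kd (thetaG p q d) (thetaG p q a)
             - gG p q g g1 g2 (thetaG p q d) (thetaG p q a) * kd (thetaG p q c) (thetaG p q b))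
            +
            (gG p q g g1 g2 c a * kd d b - gG p q g g1 g2 d b * kd c a
             + gG p q g g1 g2 (thetaG p q c) a * kd (thetaG p q d) b
             - gG p q g g1 g2 (thetaG p q d) b * kd (thetaG p q c) a
             + gG p q g g1 g2 c (thetaG p q a) * kd d (thetaG p q b)
             - gG p q g g1 g2 d (thetaG p q b) * kd c (thetaG p q a)
             + gG p q g g1 g2 (thetaG p q c) (thetaG p q a) * kd (thetaG p q d) (thetaG p q b)
             - gG p q g g1 g2 (thetaG p q d) (thetaG p q b) * kd (thetaG p q c) (thetaG p q a)))) := by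
  rintro ⟨F, -, h⟩
  -- theta computations
  have t0 : ∀ hh, thetaG p q (⟨0, hh⟩ : Fin (p+q)) = ⟨q, by omega⟩ := by
    intro hh; simp only [thetaG]
    rw [dif_pos (show ((⟨0,hh⟩ : Fin (p+q)) : ℕ) < p by simpa using by omega)]
    simp
  have t1 : ∀ hh, thetaG p q (⟨1, hh⟩ : Fin (p+q)) = ⟨1+q, by omega⟩ := by
    intro hh; simp only [thetaG]
    rw [dif_pos (show ((⟨1,hh⟩ : Fin (p+q)) : ℕ) < p by simpa using by omega)]
  have tp : ∀ hh, thetaG p q (⟨p, hh⟩ : Fin (p+q)) = ⟨p, hh⟩ := by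
    intro hh; simp only [thetaG]
    rw [dif_neg (by simp), dif_pos (show ((⟨p,hh⟩ : Fin (p+q)) : ℕ) < q by simpa using by omega)]
  have tp1 : ∀ hh, thetaG p q (⟨p+1, hh⟩ : Fin (p+q)) = ⟨p+1, hh⟩ := by
    intro hh; simp only [thetaG]
    rw [dif_neg (by simp <;> omega), dif_pos (show ((⟨p+1,hh⟩ : Fin (p+q)) : ℕ) < q by simpa using by omega)]
  -- gG computations
  have gCD : ∀ h h', gG p q g g1 g2 (⟨p+1, h⟩ : Fin (p+q)) ⟨1, h'⟩ = g1 := by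
    intro h h'; unfold gG
    rw [if_neg (by simp [Fin.ext_iff] <;> omega), if_neg (by simp [midB] <;> omega),
        if_pos (Or.inl ⟨⟨by simp, by simp <;> omega⟩, by simp [midB] <;> omega⟩)]
  have gCA : ∀ h h', gG p q g g1 g2 (⟨p+1, h⟩ : Fin (p+q)) ⟨0, h'⟩ = g1 := by
    intro h h'; unfold gG
    rw [if_neg (by simp [Fin.ext_iff] <;> omega), if_neg (by simp [midB] <;> omega),
        if_pos (Or.inl ⟨⟨by simp, by simp <;> omega⟩, by simp [midB] <;> omega⟩)]
  have gCB : ∀ h h', gG p q g g1 g2 (⟨p+1, h⟩ : Fin (p+q)) ⟨p, h'⟩ = 0 := by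
    intro h h'; unfold gG
    rw [if_neg (by simp [Fin.ext_iff]), if_pos ⟨⟨by simp, by simp <;> omega⟩, ⟨by simp, by simp <;> omega⟩⟩]
  have gDB : ∀ h h', gG p q g g1 g2 (⟨1, h⟩ : Fin (p+q)) ⟨p, h'⟩ = g1 := by
    intro h h'; unfold gG
    rw [if_neg (by simp [Fin.ext_iff] <;> omega), if_neg (by simp [midB] <;> omega),
        if_pos (Or.inr ⟨by simp [midB] <;> omega, ⟨by simp <;> omega, by simp <;> omega⟩⟩)]
  have gD'B : ∀ h h', gG p q g g1 g2 (⟨1+q, h⟩ : Fin (p+q)) ⟨p, h'⟩ = g1 := by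
    intro h h'; unfold gG
    rw [if_neg (by simp [Fin.ext_iff] <;> omega), if_neg (by simp [midB] <;> omega),
        if_pos (Or.inr ⟨by simp [midB] <;> omega, ⟨by simp <;> omega, by simp <;> omega⟩⟩)]
  have gDA : ∀ h h', gG p q g g1 g2 (⟨1, h⟩ : Fin (p+q)) ⟨0, h'⟩ = g := by
    intro h h'; unfold gG
    rw [if_neg (by simp [Fin.ext_iff]), if_neg (by simp [midB] <;> omega),
        if_neg (by simp [midB] <;> omega),
        if_neg (by rw [t1]; simp [Fin.ext_iff] <;> omega)]
  -- index inequalities / non-mid facts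
  have hAB : (⟨0, by omega⟩ : Fin (p+q)) ≠ ⟨p, by omega⟩ := by simp [Fin.ext_iff] <;> omega
  have hmAB : ¬ (midB p q (⟨0, by omega⟩ : Fin (p+q)) ∧ midB p q (⟨p, by omega⟩ : Fin (p+q))) := by
    simp [midB] <;> omega
  have hCD : (⟨p+1, by omega⟩ : Fin (p+q)) ≠ ⟨1, by omega⟩ := by simp [Fin.ext_iff] <;> omega
  have hmCD : ¬ (midB p q (⟨p+1, by omega⟩ : Fin (p+q)) ∧ midB p q (⟨1, by omega⟩ : Fin (p+q))) := by
    simp [midB] <;> omega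
  have hCA : (⟨p+1, by omega⟩ : Fin (p+q)) ≠ ⟨0, by omega⟩ := by simp [Fin.ext_iff] <;> omega
  have hmCA : ¬ (midB p q (⟨p+1, by omega⟩ : Fin (p+q)) ∧ midB p q (⟨0, by omega⟩ : Fin (p+q))) := by
    simp [midB] <;> omega
  have hDA : (⟨1, by omega⟩ : Fin (p+q)) ≠ ⟨0, by omega⟩ := by simp [Fin.ext_iff]
  have hmDA : ¬ (midB p q (⟨1, by omega⟩ : Fin (p+q)) ∧ midB p q (⟨0, by omega⟩ : Fin (p+q))) := by
    simp [midB] <;> omega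
  -- decision facts for kd conditions
  have f1 : ((1:ℕ) = 0) = False := by simp
  have f2 : ((1+q:ℕ) = 0) = False := eq_false (by omega)
  have f3 : ((1:ℕ) = q) = False := eq_false (by omega)
  have f4 : ((1+q:ℕ) = q) = False := eq_false (by omega)
  have f5 : ((p+1:ℕ) = p) = False := eq_false (by omega)
  have f6 : ((1:ℕ) = p) = False := eq_false (by omega)
  have f7 : ((p+1:ℕ) = 0) = False := eq_false (by omega)
  have f8 : ((1+q:ℕ) = p) = False := eq_false (by omega)
  have f9 : ((p+1:ℕ) = q) = False := eq_false (by omega)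
  have f10 : ((0:ℕ) = p) = False := eq_false (by omega)
  have f11 : ((q:ℕ) = 0) = False := eq_false (by omega)
  have f12 : ((q:ℕ) = p) = False := eq_false (by omega)
  have f13 : ((0:ℕ) = q) = False := eq_false (by omega)
  -- instance 1 : (c,d) = (C,D)
  have h1 := h _ _ _ _ hAB hmAB hCD hmCD
  rw [t0, t1, tp, tp1] at h1
  simp only [kd, Fin.mk.injEq, f1, f2, f3, f4, f5, f6, f7, f8, f9, f10, f11, f12, f13,
    if_false, if_true, mul_zero, zero_mul, mul_one, add_zero, zero_add, sub_zero, zero_sub,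
    neg_zero, sub_self] at h1
  rw [gCD] at h1
  -- instance 2 : (c,d) = (C,A)
  have h2 := h _ _ _ _ hAB hmAB hCA hmCA
  rw [t0, tp, tp1] at h2
  simp only [kd, Fin.mk.injEq, f1, f2, f3, f4, f5, f6, f7, f8, f9, f10, f11, f12, f13,
    if_false, if_true, mul_zero, zero_mul, mul_one, add_zero, zero_add, sub_zero, zero_sub,
    neg_zero, sub_self] at h2
  rw [gCA, gCB] at h2
  -- instance 3 : (c,d) = (D,A)
  have h3 := h _ _ _ _ hAB hmAB hDA hmDA
  rw [t0, t1, tp] at h3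
  simp only [kd, Fin.mk.injEq, f1, f2, f3, f4, f5, f6, f7, f8, f9, f10, f11, f12, f13,
    if_false, if_true, mul_zero, zero_mul, mul_one, add_zero, zero_add, sub_zero, zero_sub,
    neg_zero, sub_self] at h3
  rw [gDA, gDB, gD'B] at h3
  have hne : (2:ℝ) * g1 ≠ 0 := mul_ne_zero two_ne_zero hg1
  have h2' : 2 * g1 * (F ⟨0, by omega⟩ ⟨p, by omega⟩ ⟨p+1, by omega⟩ ⟨p+1, by omega⟩
      - F ⟨0, by omega⟩ ⟨p, by omega⟩ ⟨0, by omega⟩ ⟨0, by omega⟩) = 0 := by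
    rw [h2]; ring
  have e1 := sub_eq_zero.mp ((mul_eq_zero.mp h1).resolve_left hne)
  have e2 := sub_eq_zero.mp ((mul_eq_zero.mp h2').resolve_left hne)
  rw [← e1, e2, sub_self, mul_zero] at h3
  apply hg1; linarith
end

section
/- Let w : ℝ → ℝ be twice continuously differentiable and nonvanishing on ℝ ∖ {0}, and suppose it satisfies the basic functional equation (w′(s)/w(s) + w′(t)/w(t))·w(s+t) + w(s)·w(t) = 0 for all real s, t with s ≠ 0, t ≠ 0 and s + t ≠ 0. Then w also satisfies the second functional equation (w″(s)/(2·w(s)) − w″(t)/(2·w(t)))·w(s+t) = w(s)·w′(t) − w′(s)·w(t) for all real s, t with s ≠ 0, t ≠ 0 and s + t ≠ 0. (The second equation is obtained from the first by differentiating with respect to s and to t and subtracting the results.) -/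
/-!
Differentiating the basic equation in `s` gives
`(w'/w)'(s) w(s+t) + (w'(s)/w(s) + w'(t)/w(t)) w'(s+t) + w'(s) w(t) = 0`, and by the symmetry of
the equation the same identity holds with `s` and `t` exchanged. In the difference the
`w'(s+t)` terms cancel; writing `(w'/w)' = w''/w - (w'/w)^2`, the difference of squares
`(w'(s)/w(s))^2 - (w'(t)/w(t))^2` times `w(s+t)` is evaluated by the basic equation itself,
which leaves twice the second equation.
-/

open Filter Topology

variable {𝕜 : Type*} [NontriviallyNormedField 𝕜]

theorem HasDerivAt.eq_zero_of_eventuallyEq_zero {f : 𝕜 → 𝕜} {f' x : 𝕜}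
    (hf : HasDerivAt f f' x) (h : f =ᶠ[𝓝 x] 0) : f' = 0 :=
  (hf.congr_of_eventuallyEq h.symm).unique (hasDerivAt_const x 0)

theorem basicFunctionalEquation_deriv_left {w w' w'' : 𝕜 → 𝕜}
    (hd1 : ∀ t, t ≠ 0 → HasDerivAt w (w' t) t)
    (hd2 : ∀ t, t ≠ 0 → HasDerivAt w' (w'' t) t)
    (hnz : ∀ t, t ≠ 0 → w t ≠ 0)
    (heq : ∀ s t, s ≠ 0 → t ≠ 0 → s + t ≠ 0 →
      (w' s / w s + w' t / w t) * w (s + t) + w s * w t = 0)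
    {s t : 𝕜} (hs : s ≠ 0) (ht : t ≠ 0) (hst : s + t ≠ 0) :
    (w'' s * w s - w' s * w' s) / w s ^ 2 * w (s + t)
      + (w' s / w s + w' t / w t) * w' (s + t) + w' s * w t = 0 := by
  have hderiv : HasDerivAt (fun y ↦ (w' y / w y + w' t / w t) * w (y + t) + w y * w t)
      ((w'' s * w s - w' s * w' s) / w s ^ 2 * w (s + t)
        + (w' s / w s + w' t / w t) * w' (s + t) + w' s * w t) s :=
    ((((hd2 s hs).div (hd1 s hs) (hnz s hs)).add_const _).mul
      ((hd1 (s + t) hst).comp_add_const s t)).add ((hd1 s hs).mul_const _)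
  refine hderiv.eq_zero_of_eventuallyEq_zero ?_
  filter_upwards [eventually_ne_nhds hs,
    (continuous_add_const t).continuousAt.eventually_ne hst] with y hy hyt
  exact heq y t hy ht hyt

theorem stmt_18_general (w w' w'' : ℝ → ℝ)
    (hd1 : ∀ t : ℝ, t ≠ 0 → HasDerivAt w (w' t) t)
    (hd2 : ∀ t : ℝ, t ≠ 0 → HasDerivAt w' (w'' t) t)
    (hnz : ∀ t : ℝ, t ≠ 0 → w t ≠ 0)
    (heq : ∀ s t : ℝ, s ≠ 0 → t ≠ 0 → s + t ≠ 0 →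
      (w' s / w s + w' t / w t) * w (s + t) + w s * w t = 0) :
    ∀ s t : ℝ, s ≠ 0 → t ≠ 0 → s + t ≠ 0 →
      (w'' s / (2 * w s) - w'' t / (2 * w t)) * w (s + t) = w s * w' t - w' s * w t := by
  intro s t hs ht hst
  have hbasic := heq s t hs ht hst
  have hds := basicFunctionalEquation_deriv_left hd1 hd2 hnz heq hs ht hst
  have hdt := basicFunctionalEquation_deriv_left hd1 hd2 hnz heq ht hs (by rwa [add_comm])
  rw [add_comm t s] at hdt
  have hws := hnz s hs
  have hwt := hnz t ht
  field_simp at hbasic hds hdt ⊢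
  refine mul_left_cancel₀ (mul_ne_zero hws hwt) ?_
  linear_combination w t * hds - w s * hdt + (w t * w' s - w s * w' t) * hbasic

theorem stmt_18 (w w' w'' : ℝ → ℝ)
    (hd1 : ∀ t : ℝ, t ≠ 0 → HasDerivAt w (w' t) t)
    (hd2 : ∀ t : ℝ, t ≠ 0 → HasDerivAt w' (w'' t) t)
    (hcont : ContinuousOn w'' {t : ℝ | t ≠ 0})
    (hnz : ∀ t : ℝ, t ≠ 0 → w t ≠ 0)
    (heq : ∀ s t : ℝ, s ≠ 0 → t ≠ 0 → s + t ≠ 0 →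
      (w' s / w s + w' t / w t) * w (s + t) + w s * w t = 0) :
    ∀ s t : ℝ, s ≠ 0 → t ≠ 0 → s + t ≠ 0 →
      (w'' s / (2 * w s) - w'' t / (2 * w t)) * w (s + t) = w s * w' t - w' s * w t :=
  stmt_18_general w w' w'' hd1 hd2 hnz heq
end
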